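/- The following are equivalent for a monoid S: (1) every finitely generated S-act embeds into a monogenic S-act; (2) every 2-generated S-act embeds into a monogenic S-act; (3) the free S-act on a 2-element set embeds into a monogenic S-act; (4) the free S-act on a 2-element set embeds into S (as a right S-act); (5) there exist left cancellable elements s, t ∈ S with sS ∩ tS = ∅. -/

import Mathlib

universe u v w

/-- A right `S`-act: a set with an action `A × S → A` with `a·1 = a`, `a·(st) = (a·s)·t`. -/
class RAct (S : Type u) [Monoid S] (A : Type v) where
  act : A → S → A
  act_one : ∀ a : A, act a 1 = a
  act_mul : ∀ (a : A) (s t : S), act a (s * t) = act (act a s) t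

infixl:70 " ⊳ " => RAct.act

/-- An `S`-morphism of right `S`-acts. -/
def IsRActHom (S : Type u) [Monoid S] {A : Type v} {B : Type w}
    [RAct S A] [RAct S B] (f : A → B) : Prop :=
  ∀ (a : A) (s : S), f (a ⊳ s) = f a ⊳ s

/-- The free `S`-act `F_S(X) = X × S`, with `(x,s)·t = (x, st)`. -/
instance freeAct (S : Type u) [Monoid S] (X : Type w) : RAct S (X × S) where
  act p s := (p.1, p.2 * s)
  act_one p := by simp
  act_mul p s t := by simp [mul_assoc]

/-- Disjoint union of two `S`-acts. -/
instance sumAct (S : Type u) [Monoid S] {A : Type v} {B : Type w} [RAct S A] [RAct S B] :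
    RAct S (A ⊕ B) where
  act x s := Sum.elim (fun a => Sum.inl (a ⊳ s)) (fun b => Sum.inr (b ⊳ s)) x
  act_one := by rintro (a | b) <;> simp [RAct.act_one]
  act_mul := by rintro (a | b) s t <;> simp [RAct.act_mul]

/-- Congruence on a right `S`-act. -/
structure IsActCongr (S : Type u) [Monoid S] {A : Type v} [RAct S A]
    (r : A → A → Prop) : Prop where
  refl : ∀ a, r a a
  symm : ∀ {a b}, r a b → r b a
  trans : ∀ {a b c}, r a b → r b c → r a c
  act : ∀ {a b} (s : S), r a b → r (a ⊳ s) (b ⊳ s)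

/-- The act congruence generated by a set of pairs `H`. -/
def congGen (S : Type u) [Monoid S] {A : Type v} [RAct S A]
    (H : Set (A × A)) (a b : A) : Prop :=
  ∀ r : A → A → Prop, IsActCongr S r → (∀ p ∈ H, r p.1 p.2) → r a b

theorem isActCongr_congGen (S : Type u) [Monoid S] {A : Type v} [RAct S A]
    (H : Set (A × A)) : IsActCongr S (congGen S H) where
  refl a := fun _r hr _ => hr.refl a
  symm h := fun r hr hH => hr.symm (h r hr hH)
  trans h1 h2 := fun r hr hH => hr.trans (h1 r hr hH) (h2 r hr hH)
  act s h := fun r hr hH => hr.act s (h r hr hH)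

/-- Equations over an `S`-act `A` with variables from `X`:
`xs = yt` (which includes `xs = xt`) or `xs = a`. -/
inductive Eqn (S : Type u) (A : Type v) (X : Type w) where
  | vv : X → S → X → S → Eqn S A X
  | vc : X → S → A → Eqn S A X

/-- `b : X → C` is a solution of `E` in the act `C`, where `ι : A → C` interprets constants. -/
def IsSolution (S : Type u) [Monoid S] {A : Type v} {X : Type w} {C : Type*}
    [RAct S C] (ι : A → C) (E : Set (Eqn S A X)) (b : X → C) : Prop :=
  (∀ x s y t, Eqn.vv x s y t ∈ E → b x ⊳ s = b y ⊳ t) ∧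
  (∀ x s a, Eqn.vc x s a ∈ E → b x ⊳ s = ι a)

/-- A set of equations over `A` is consistent if it has a solution in some act containing `A`. -/
def Consistent (S : Type u) [Monoid S] {A : Type v} {X : Type w} [RAct S A]
    (E : Set (Eqn S A X)) : Prop :=
  ∃ (B : Type (max u v w)) (_ : RAct S B) (ι : A → B),
    Function.Injective ι ∧ IsRActHom S ι ∧ ∃ b : X → B, IsSolution S ι E b

/-- `A` is `n`-absolutely pure: every finite consistent system of equations over `A`
in at most `n` variables has a solution in `A`. -/
def NPure (S : Type u) [Monoid S] (A : Type v) [RAct S A] (n : ℕ) : Prop :=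
  ∀ E : Set (Eqn S A (Fin n)), E.Finite → Consistent S E →
    ∃ c : Fin n → A, IsSolution S id E c

/-- Almost pure: 1-absolutely pure. -/
def AlmostPure (S : Type u) [Monoid S] (A : Type v) [RAct S A] : Prop :=
  NPure S A 1

/-- Absolutely pure: `n`-absolutely pure for every `n`. -/
def AbsolutelyPure (S : Type u) [Monoid S] (A : Type v) [RAct S A] : Prop :=
  ∀ n : ℕ, NPure S A n

/-- The pairs `H(Σ)` in the free act coming from constant-free equations of `E`. -/
def Hcf (S : Type u) [Monoid S] {A : Type v} {X : Type w}
    (E : Set (Eqn S A X)) : Set ((X × S) × (X × S)) :=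
  {p | ∃ x u y v, Eqn.vv x u y v ∈ E ∧ p = ((x, u), (y, v))}

/-- The pairs `H(Σ) ∪ K(Σ)` on the disjoint union `A ⊔ F_S(X)`. -/
def HK (S : Type u) [Monoid S] {A : Type v} {X : Type w}
    (E : Set (Eqn S A X)) : Set ((A ⊕ X × S) × (A ⊕ X × S)) :=
  {p | (∃ x u y v, Eqn.vv x u y v ∈ E ∧ p = (Sum.inr (x, u), Sum.inr (y, v))) ∨
       (∃ x s a, Eqn.vc x s a ∈ E ∧ p = (Sum.inr (x, s), Sum.inl a))}

/-- Quotient of an act by a generated congruence. -/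
instance quotAct (S : Type u) [Monoid S] {A : Type v} [RAct S A] (H : Set (A × A)) :
    RAct S (Quot (congGen S H)) where
  act q s := Quot.map (fun a => a ⊳ s) (fun _a _b h => (isActCongr_congGen S H).act s h) q
  act_one := by
    rintro ⟨a⟩
    show Quot.mk _ (a ⊳ (1 : S)) = Quot.mk _ a
    rw [RAct.act_one]
  act_mul := by
    rintro ⟨a⟩ s t
    show Quot.mk _ (a ⊳ (s * t)) = Quot.mk _ (a ⊳ s ⊳ t)
    rw [RAct.act_mul]

/-- The canonical extension `A(Σ) = (A ⊔ F_S(X)) / κ_Σ`. -/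
abbrev ActExt (S : Type u) [Monoid S] {A : Type v} {X : Type w} [RAct S A]
    (E : Set (Eqn S A X)) : Type (max u v w) :=
  Quot (congGen S (HK S E))

/-- The natural map `ν_Σ : A → A(Σ)`. -/
def extOfBase (S : Type u) [Monoid S] {A : Type v} {X : Type w} [RAct S A]
    (E : Set (Eqn S A X)) (a : A) : ActExt S E :=
  Quot.mk _ (Sum.inl a)

/-- A finitely generated `S`-act. -/
def IsFG (S : Type u) [Monoid S] (A : Type v) [RAct S A] : Prop :=
  ∃ T : Finset A, ∀ a : A, ∃ t ∈ T, ∃ s : S, a = t ⊳ s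

/-- A monogenic (cyclic) `S`-act. -/
def Monogenic (S : Type u) [Monoid S] (C : Type v) [RAct S C] : Prop :=
  ∃ c : C, ∀ y : C, ∃ s : S, y = c ⊳ s

/-- `A` embeds into `C` as an `S`-act. -/
def ActEmbeds (S : Type u) [Monoid S] (A : Type v) (C : Type w) [RAct S A] [RAct S C] : Prop :=
  ∃ ι : A → C, IsRActHom S ι ∧ Function.Injective ι

/-- A finitely presented `S`-act: isomorphic to `F_S(X)/ρ` with `X` finite and
`ρ` a finitely generated congruence. -/
def IsFP (S : Type u) [Monoid S] (A : Type v) [RAct S A] : Prop :=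
  ∃ (n : ℕ) (H : Set ((Fin n × S) × (Fin n × S))), H.Finite ∧
    ∃ φ : Fin n × S → A, IsRActHom S φ ∧ Function.Surjective φ ∧
      ∀ p q : Fin n × S, φ p = φ q ↔ congGen S H p q

/-- A right coherent monoid. -/
def RightCoherent (S : Type u) [Monoid S] : Prop :=
  ∀ (A B : Type u) (_ : RAct S A) (_ : RAct S B) (ι : B → A),
    IsRActHom S ι → Function.Injective ι → IsFP S A → IsFG S B → IsFP S B

/-- The fem-property: every finitely generated `S`-act embeds into a monogenic act. -/
def FemProperty (S : Type u) [Monoid S] : Prop :=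
  ∀ (A : Type u) (_ : RAct S A), IsFG S A → ∃ (C : Type u) (_ : RAct S C),
    Monogenic S C ∧ ActEmbeds S A C

/-- A subact of an `S`-act. -/
structure Subact (S : Type u) [Monoid S] (B : Type v) [RAct S B] where
  carrier : Set B
  closed : ∀ b ∈ carrier, ∀ s : S, b ⊳ s ∈ carrier

instance subAct (S : Type u) [Monoid S] {B : Type v} [RAct S B] (T : Subact S B) :
    RAct S T.carrier where
  act a s := ⟨a.1 ⊳ s, T.closed a.1 a.2 s⟩
  act_one a := Subtype.ext (RAct.act_one a.1)
  act_mul a s t := Subtype.ext (RAct.act_mul a.1 s t)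


def BuiltFrom (S : Type u) [Monoid S] {A B : Type v} [RAct S A] [RAct S B]
    (ι : A → B) (P : ℕ → Prop) : Prop :=
  IsRActHom S ι ∧ Function.Injective ι ∧
  ∃ (ξ : Ordinal.{v}) (C : Ordinal.{v} → Subact S B),
    (C 0).carrier = Set.range ι ∧
    (∀ i j : Ordinal.{v}, i ≤ j → (C i).carrier ⊆ (C j).carrier) ∧
    (C ξ).carrier = Set.univ ∧
    (∀ ζ : Ordinal.{v}, ζ ≤ ξ → Order.IsSuccLimit ζ → (C ζ).carrier = ⋃ i ∈ Set.Iio ζ, (C i).carrier) ∧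
    (∀ i : Ordinal.{v}, i < ξ → ∃ m : ℕ, P m ∧
      (∃ E : Set (Eqn S (↥(C i).carrier) (Fin m)), Consistent S E ∧
        (∃ e : ActExt S E → B, IsRActHom S e ∧ Function.Injective e ∧
          Set.range e = (C (i + 1)).carrier ∧
          (∀ d : ↥(C i).carrier, e (extOfBase S E d) = d.1))))


/-- The right regular `S`-act: `S` acting on itself by multiplication. -/
instance regAct (S : Type u) [Monoid S] : RAct S S where
  act a s := a * s
  act_one := mul_one
  act_mul a s t := (mul_assoc a s t).symm

/-! A family `u : ι → S` for which `(i, v) ↦ u i * v` is injective, i.e. an embedding of the free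
act `F_S(ι)` into `S`, lets one glue any act generated by an `ι`-indexed family onto a copy of `S`:
the `i`-th generator is identified with `u i` in the pushout `(A ⊔ S) / ⟨aᵢ ~ uᵢ⟩`, which is
generated by `1 ∈ S`. Injectivity of `A` into the pushout is witnessed by the normal form sending
`u i * v` to `aᵢ · v`, well defined exactly because of that injectivity. If `s`, `t` are left
cancellable with `sS ∩ tS = ∅`, the elements `sⁿ t` give such a family indexed by `ℕ`. -/

section FreeEmbedding

variable {S : Type u} [Monoid S] {ι : Type*}

-- Written with `freeAct` explicitly: in `(i, 1) ⊳ v` the `Monoid S` argument stays unresolved.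
theorem freeAct_mk_one_act (i : ι) (v : S) : (freeAct S ι).act (i, 1) v = (i, v) :=
  Prod.ext rfl (one_mul v)

theorem isRActHom_mul_free (u : ι → S) : IsRActHom S fun p : ι × S => u p.1 * p.2 :=
  fun p r => (mul_assoc (u p.1) p.2 r).symm

theorem exists_injective_mul_of_embeds_monogenic {C : Type*} [RAct S C]
    (hC : Monogenic S C) (hemb : ActEmbeds S (ι × S) C) :
    ∃ u : ι → S, Function.Injective fun p : ι × S => u p.1 * p.2 := by
  obtain ⟨c, hc⟩ := hC
  obtain ⟨φ, hφ, hinj⟩ := hemb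
  choose u hu using fun i => hc (φ (i, 1))
  have hφu : ∀ p : ι × S, φ p = c ⊳ (u p.1 * p.2) := by
    rintro ⟨i, v⟩
    have h := hφ (i, 1) v
    rwa [freeAct_mk_one_act, hu i, ← RAct.act_mul] at h
  exact ⟨u, fun p q h => hinj (by rw [hφu, hφu]; exact congrArg (c ⊳ ·) h)⟩

theorem pow_mul_mul_injective {s t : S} (hs : ∀ u v : S, s * u = s * v → u = v)
    (ht : ∀ u v : S, t * u = t * v → u = v) (hst : ∀ u v : S, s * u ≠ t * v) :
    Function.Injective fun p : ℕ × S => s ^ p.1 * t * p.2 := by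
  rintro ⟨m, v⟩ ⟨n, w⟩ h
  simp only at h
  induction m generalizing n with
  | zero =>
    cases n with
    | zero => simpa using ht v w (by simpa using h)
    | succ n => exact absurd (by simpa [pow_succ', mul_assoc] using h.symm) (hst _ v)
  | succ m ih =>
    cases n with
    | zero => exact absurd (by simpa [pow_succ', mul_assoc] using h) (hst _ w)
    | succ n =>
      have h' := hs _ _ (by simpa only [pow_succ', mul_assoc] using h)
      simpa [← mul_assoc] using ih n (by simpa only [mul_assoc] using h')

end FreeEmbedding

section Gluing

open Sum

variable {S : Type u} [Monoid S] {ι : Type*} {A : Type u} [RAct S A]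

theorem congGen_of_mk_eq {B : Type*} [RAct S B] {H : Set (B × B)} {x y : B}
    (h : Quot.mk (congGen S H) x = Quot.mk (congGen S H) y) : congGen S H x y :=
  have hc := isActCongr_congGen S H
  (Equivalence.eqvGen_iff ⟨hc.refl, hc.symm, hc.trans⟩).1 (Quot.eqvGen_exact h)

open Classical in
noncomputable def gluingNormalForm (u : ι → S) (a : ι → A) : A ⊕ S → A ⊕ S
  | inl x => inl x
  | inr w => if h : ∃ p : ι × S, w = u p.1 * p.2 then inl (a h.choose.1 ⊳ h.choose.2)
      else inr w

variable {u : ι → S} (hu : Function.Injective fun p : ι × S => u p.1 * p.2) (a : ι → A)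
include hu

theorem gluingNormalForm_inr_mul (i : ι) (v : S) :
    gluingNormalForm u a (inr (u i * v)) = inl (a i ⊳ v) := by
  have h : ∃ p : ι × S, u i * v = u p.1 * p.2 := ⟨(i, v), rfl⟩
  have hp : h.choose = (i, v) := hu h.choose_spec.symm
  rw [gluingNormalForm, dif_pos h, hp]

theorem gluingNormalForm_act (p : A ⊕ S) (r : S) :
    gluingNormalForm u a (gluingNormalForm u a p ⊳ r) = gluingNormalForm u a (p ⊳ r) := by
  rcases p with x | w
  · rfl
  by_cases h : ∃ p : ι × S, w = u p.1 * p.2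
  · obtain ⟨⟨i, v⟩, rfl⟩ := h
    rw [gluingNormalForm_inr_mul hu]
    show inl (a i ⊳ v ⊳ r) = gluingNormalForm u a (inr (u i * v * r))
    rw [mul_assoc, gluingNormalForm_inr_mul hu, RAct.act_mul]
  · rw [gluingNormalForm, dif_neg h]

theorem isActCongr_gluingNormalForm_ker :
    IsActCongr S fun p p' : A ⊕ S => gluingNormalForm u a p = gluingNormalForm u a p' where
  refl _ := rfl
  symm := Eq.symm
  trans := Eq.trans
  act r h := by rw [← gluingNormalForm_act hu, h, gluingNormalForm_act hu]

theorem embeds_monogenic_of_injective_mul (ha : ∀ x : A, ∃ i, ∃ v : S, x = a i ⊳ v) :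
    ∃ (C : Type u) (_ : RAct S C), Monogenic S C ∧ ActEmbeds S A C := by
  let H : Set ((A ⊕ S) × (A ⊕ S)) := Set.range fun i => (inl (a i), inr (u i))
  let q : A ⊕ S → Quot (congGen S H) := Quot.mk _
  have glue (i : ι) : q (inl (a i)) = q (inr (u i)) :=
    Quot.sound fun _ _ hH => hH _ ⟨i, rfl⟩
  have gen (w : S) : q (inr w) = q (inr 1) ⊳ w := congrArg q (congrArg inr (one_mul w).symm)
  refine ⟨Quot (congGen S H), inferInstance, ⟨q (inr 1), ?_⟩, q ∘ inl, fun _ _ => rfl, ?_⟩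
  · rintro ⟨x | w⟩
    · obtain ⟨i, v, rfl⟩ := ha x
      refine ⟨u i * v, ?_⟩
      calc q (inl (a i ⊳ v)) = q (inl (a i)) ⊳ v := rfl
        _ = q (inr (u i)) ⊳ v := by rw [glue]
        _ = q (inr 1) ⊳ (u i * v) := by rw [RAct.act_mul, ← gen]
    · exact ⟨w, gen w⟩
  · intro x y hxy
    have hH : ∀ p ∈ H, gluingNormalForm u a p.1 = gluingNormalForm u a p.2 := by
      rintro _ ⟨i, rfl⟩
      show inl (a i) = gluingNormalForm u a (inr (u i))
      simpa [RAct.act_one] using (gluingNormalForm_inr_mul hu a i 1).symm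
    have hxy' := congGen_of_mk_eq hxy _ (isActCongr_gluingNormalForm_ker hu a) hH
    exact inl_injective hxy'

end Gluing

theorem embeds_monogenic_of_countable_generators {S : Type u} [Monoid S] {s t : S}
    (hs : ∀ u v : S, s * u = s * v → u = v) (ht : ∀ u v : S, t * u = t * v → u = v)
    (hst : ∀ u v : S, s * u ≠ t * v) {ι : Type*} [Countable ι] {A : Type u} [RAct S A]
    (a : ι → A) (ha : ∀ x : A, ∃ i, ∃ v : S, x = a i ⊳ v) :
    ∃ (C : Type u) (_ : RAct S C), Monogenic S C ∧ ActEmbeds S A C := by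
  obtain ⟨f, hf⟩ := Countable.exists_injective_nat ι
  exact embeds_monogenic_of_injective_mul (u := fun i => s ^ f i * t)
    ((pow_mul_mul_injective hs ht hst).comp (hf.prodMap Function.injective_id)) a ha

/-- Characterisation of the fem-property. -/
theorem fem_tfae (S : Type u) [Monoid S] :
    [ FemProperty S,
      ∀ (A : Type u) (_ : RAct S A),
        (∃ a b : A, ∀ x : A, (∃ s : S, x = a ⊳ s) ∨ (∃ s : S, x = b ⊳ s)) →
        ∃ (C : Type u) (_ : RAct S C), Monogenic S C ∧ ActEmbeds S A C,
      ∃ (C : Type u) (_ : RAct S C), Monogenic S C ∧ ActEmbeds S (Fin 2 × S) C,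
      ActEmbeds S (Fin 2 × S) S,
      ∃ s t : S, (∀ u v : S, s * u = s * v → u = v) ∧
        (∀ u v : S, t * u = t * v → u = v) ∧ ∀ u v : S, s * u ≠ t * v ].TFAE := by
  tfae_have 1 → 2 := by
    rintro hfem A _ ⟨a, b, hab⟩
    classical
    refine hfem A _ ⟨{a, b}, fun x => ?_⟩
    rcases hab x with ⟨v, hv⟩ | ⟨v, hv⟩
    exacts [⟨a, by simp, v, hv⟩, ⟨b, by simp, v, hv⟩]
  tfae_have 2 → 3 := fun h2 => h2 (Fin 2 × S) _ ⟨(0, 1), (1, 1), by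
    rintro ⟨i, w⟩
    fin_cases i
    exacts [Or.inl ⟨w, (freeAct_mk_one_act 0 w).symm⟩,
      Or.inr ⟨w, (freeAct_mk_one_act 1 w).symm⟩]⟩
  tfae_have 3 → 5 := by
    rintro ⟨C, _, hC, hemb⟩
    obtain ⟨u, hu⟩ := exists_injective_mul_of_embeds_monogenic hC hemb
    refine ⟨u 0, u 1, fun v w h => ?_, fun v w h => ?_, fun v w h => ?_⟩
    · exact congrArg Prod.snd (@hu (0, v) (0, w) h)
    · exact congrArg Prod.snd (@hu (1, v) (1, w) h)
    · exact zero_ne_one (congrArg Prod.fst (@hu (0, v) (1, w) h))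
  tfae_have 5 → 4 := fun ⟨s, t, hs, ht, hst⟩ =>
    ⟨_, isRActHom_mul_free fun i : Fin 2 => s ^ (i : ℕ) * t,
      (pow_mul_mul_injective hs ht hst).comp (Fin.val_injective.prodMap Function.injective_id)⟩
  tfae_have 4 → 3 := fun h4 => ⟨S, _, ⟨1, fun y => ⟨y, (one_mul y).symm⟩⟩, h4⟩
  tfae_have 5 → 1 := fun ⟨s, t, hs, ht, hst⟩ A _ ⟨T, hT⟩ =>
    embeds_monogenic_of_countable_generators hs ht hst (fun i : T => i.1) fun x => by
      obtain ⟨g, hg, v, hx⟩ := hT x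
      exact ⟨⟨g, hg⟩, v, hx⟩
  tfae_finish
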